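/- For n ≥ 1, let Σ_k = {(x,t) ∈ ℝ^n × (0,∞) : t = 2^{-k}, |x| ≥ 2^{-k}} for k ≥ 1, and let Ω = ℝ^{n+1}_+ \ ⋃_{k≥1} Σ_k. Then Ω is open and connected, and its boundary ∂Ω = (ℝ^n × {0}) ∪ ⋃_{k≥1} Σ_k does not have locally finite H^n-measure: every ball centered at a point of ℝ^n × {0} has infinite H^n(∂Ω ∩ B). -/

import Mathlib

open Metric MeasureTheory Set Filter
open scoped Topology

noncomputable section

/-- The sheet `Σ_k = {(x,t) : t = 2^{-k}, |x| ≥ 2^{-k}}` in `ℝ^n × ℝ`. -/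
def sheet (n k : ℕ) : Set (EuclideanSpace ℝ (Fin n) × ℝ) :=
  {p | p.2 = ((2 : ℝ) ^ k)⁻¹ ∧ ((2 : ℝ) ^ k)⁻¹ ≤ ‖p.1‖}

/-- The domain `Ω = ℝ^{n+1}_+ \ ⋃_{k ≥ 1} Σ_k`. -/
def sheetDomain (n : ℕ) : Set (EuclideanSpace ℝ (Fin n) × ℝ) :=
  {p : EuclideanSpace ℝ (Fin n) × ℝ | 0 < p.2} \ ⋃ k : ℕ, sheet n (k + 1)

/-!
Only finitely many sheets lie above any height `ε > 0`, so the sheets together with `{t ≤ 0}`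
form a closed set and `Ω` is open. The heights of the sheets are countable, so `Ω` is dense in the
upper half-space; this gives its closure and hence its boundary. Every horizontal slice of `Ω` is
star-shaped about the vertical axis `{0} × (0, ∞) ⊆ Ω`, so `Ω` is connected. Finally, a ball
centred on `ℝ^n × {0}` contains, inside the sheets, infinitely many disjoint isometric copies
`A × {2^{-k}}` of one nonempty open set `A ⊆ ℝ^n`, each of the same positive `H^n`-measure.
-/

open Function
open scoped ENNReal

theorem isClosed_iUnion_union_setOf_le_zero {X : Type*} [TopologicalSpace X] {f : X → ℝ}
    (hf : Continuous f) {S : ℕ → Set X} (hS : ∀ k, IsClosed (S k)) {a : ℕ → ℝ}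
    (ha : Tendsto a atTop (𝓝 0)) (hSa : ∀ k, ∀ p ∈ S k, f p ≤ a k) :
    IsClosed ((⋃ k, S k) ∪ {p | f p ≤ 0}) := by
  rw [← isOpen_compl_iff, isOpen_iff_mem_nhds]
  intro p hp
  simp only [compl_union, mem_inter_iff, mem_compl_iff, mem_iUnion, not_exists, mem_ofPred_eq,
    not_le] at hp
  obtain ⟨hpS, hp0⟩ := hp
  obtain ⟨N, hN⟩ := eventually_atTop.1 (ha.eventually (gt_mem_nhds (half_pos hp0)))
  have hf_near : ∀ᶠ q in 𝓝 p, f p / 2 < f q :=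
    hf.continuousAt.eventually (lt_mem_nhds (half_lt_self hp0))
  have hS_near : ∀ᶠ q in 𝓝 p, ∀ k ∈ Iio N, q ∉ S k :=
    (eventually_all_finite (finite_Iio N)).2 fun k _ => (hS k).isOpen_compl.mem_nhds (hpS k)
  filter_upwards [hf_near, hS_near] with q hfq hSq
  simp only [compl_union, mem_inter_iff, mem_compl_iff, mem_iUnion, not_exists, mem_ofPred_eq,
    not_le]
  refine ⟨fun k hk => ?_, by linarith⟩
  rcases lt_or_ge k N with hkN | hkN
  · exact hSq k hkN hk
  · linarith [hSa k q hk, hN k hkN]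

theorem measure_eq_top_of_disjoint_subsets {α : Type*} [MeasurableSpace α] (μ : Measure α)
    {s : ℕ → Set α} {t : Set α} {c : ℝ≥0∞} (hc : c ≠ 0) (hcs : ∀ k, c ≤ μ (s k))
    (hs : ∀ k, MeasurableSet (s k)) (hd : Pairwise (Disjoint on s)) (hst : ∀ k, s k ⊆ t) :
    μ t = ⊤ := by
  rw [eq_top_iff]
  calc ⊤ = ∑' _ : ℕ, c := (ENNReal.tsum_const_eq_top_of_ne_zero hc).symm
    _ ≤ ∑' k, μ (s k) := ENNReal.tsum_le_tsum hcs
    _ = μ (⋃ k, s k) := (measure_iUnion hd hs).symm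
    _ ≤ μ t := measure_mono (iUnion_subset hst)

theorem isometry_prodMk_left {X Y : Type*} [PseudoEMetricSpace X] [PseudoEMetricSpace Y] (y : Y) :
    Isometry fun x : X => (x, y) := by
  intro x x'
  simp [Prod.edist_eq]

theorem exists_mem_ball_lt_norm {E : Type*} [NormedAddCommGroup E] [NormedSpace ℝ E]
    [Nontrivial E] (x₀ : E) {r : ℝ} (hr : 0 < r) : ∃ x ∈ ball x₀ r, r / 4 < ‖x‖ := by
  by_cases hx₀ : r / 4 < ‖x₀‖
  · exact ⟨x₀, mem_ball_self hr, hx₀⟩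
  obtain ⟨v, hv⟩ := exists_norm_eq E (c := 3 * r / 4) (by positivity)
  refine ⟨x₀ + v, ?_, ?_⟩
  · rw [mem_ball, dist_eq_norm, add_sub_cancel_left, hv]
    linarith
  · have := norm_sub_le (x₀ + v) x₀
    rw [add_sub_cancel_left, hv] at this
    linarith

theorem tendsto_inv_two_pow_succ : Tendsto (fun k : ℕ => ((2 : ℝ) ^ (k + 1))⁻¹) atTop (𝓝 0) :=
  (tendsto_inv_atTop_zero.comp (tendsto_pow_atTop_atTop_of_one_lt one_lt_two)).comp
    (tendsto_add_atTop_nat 1)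

section

variable {n : ℕ}

theorem isClosed_sheet (n k : ℕ) : IsClosed (sheet n k) :=
  (isClosed_eq continuous_snd continuous_const).inter
    (isClosed_le continuous_const (continuous_norm.comp continuous_fst))

theorem snd_pos_of_mem_sheet {k : ℕ} {p : EuclideanSpace ℝ (Fin n) × ℝ} (hp : p ∈ sheet n k) :
    0 < p.2 :=
  hp.1 ▸ by positivity

theorem mem_sheetDomain_iff {p : EuclideanSpace ℝ (Fin n) × ℝ} :
    p ∈ sheetDomain n ↔
      0 < p.2 ∧ ∀ k : ℕ, p.2 = ((2 : ℝ) ^ (k + 1))⁻¹ → ‖p.1‖ < ((2 : ℝ) ^ (k + 1))⁻¹ := by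
  simp [sheetDomain, sheet]

theorem compl_sheetDomain :
    (sheetDomain n)ᶜ = (⋃ k : ℕ, sheet n (k + 1)) ∪ {p | p.2 ≤ 0} := by
  rw [sheetDomain, compl_sdiff, compl_ofPred]
  simp only [not_lt]

theorem isOpen_sheetDomain (n : ℕ) : IsOpen (sheetDomain n) := by
  rw [← isClosed_compl_iff, compl_sheetDomain]
  exact isClosed_iUnion_union_setOf_le_zero continuous_snd (fun k => isClosed_sheet n (k + 1))
    tendsto_inv_two_pow_succ fun k p hp => hp.1.le

theorem closure_sheetDomain (n : ℕ) : closure (sheetDomain n) = {p | 0 ≤ p.2} := by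
  have hclosure_pos : closure {p : EuclideanSpace ℝ (Fin n) × ℝ | 0 < p.2} = {p | 0 ≤ p.2} := by
    have := IsOpenMap.preimage_closure_eq_closure_preimage
      (isOpenMap_snd (X := EuclideanSpace ℝ (Fin n)) (Y := ℝ)) continuous_snd (Ioi 0)
    rw [closure_Ioi] at this
    exact this.symm
  refine (closure_mono sdiff_subset).trans hclosure_pos.le |>.antisymm ?_
  set heights := range fun k : ℕ => ((2 : ℝ) ^ (k + 1))⁻¹
  have hdense : Dense (Prod.snd ⁻¹' heightsᶜ : Set (EuclideanSpace ℝ (Fin n) × ℝ)) :=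
    ((countable_range _).dense_compl ℝ).preimage isOpenMap_snd
  have hsub : {p : EuclideanSpace ℝ (Fin n) × ℝ | 0 < p.2} ∩ Prod.snd ⁻¹' heightsᶜ ⊆
      sheetDomain n := by
    rintro p ⟨hp, hpk⟩
    exact mem_sheetDomain_iff.2 ⟨hp, fun k hk => absurd ⟨k, hk.symm⟩ hpk⟩
  rw [← hclosure_pos]
  exact closure_minimal ((hdense.open_subset_closure_inter (isOpen_lt continuous_const
    continuous_snd)).trans (closure_mono hsub)) isClosed_closure

theorem frontier_sheetDomain (n : ℕ) :
    frontier (sheetDomain n) = {p | p.2 = 0} ∪ ⋃ k : ℕ, sheet n (k + 1) := by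
  rw [(isOpen_sheetDomain n).frontier_eq, closure_sheetDomain, sdiff_eq_compl_inter,
    compl_sheetDomain]
  ext p
  have hpos (h : p ∈ ⋃ k : ℕ, sheet n (k + 1)) : 0 < p.2 :=
    let ⟨_, hk⟩ := mem_iUnion.1 h
    snd_pos_of_mem_sheet hk
  simp only [mem_inter_iff, mem_union, mem_ofPred_eq]
  constructor
  · rintro ⟨h | h, h'⟩
    · exact Or.inr h
    · exact Or.inl (le_antisymm h h')
  · rintro (h | h)
    · exact ⟨Or.inr h.le, h.ge⟩
    · exact ⟨Or.inl h, (hpos h).le⟩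

theorem isConnected_sheetDomain (n : ℕ) : IsConnected (sheetDomain n) := by
  set axis := (fun t : ℝ => ((0 : EuclideanSpace ℝ (Fin n)), t)) '' Ioi 0
  have haxis : axis ⊆ sheetDomain n := by
    rintro _ ⟨t, ht, rfl⟩
    exact mem_sheetDomain_iff.2 ⟨ht, fun k _ => by simp only [norm_zero]; positivity⟩
  have hslide : ∀ p ∈ sheetDomain n,
      (fun c : ℝ => (c • p.1, p.2)) '' Icc 0 1 ⊆ sheetDomain n := by
    rintro p hp _ ⟨c, ⟨hc0, hc1⟩, rfl⟩
    obtain ⟨hp0, hpk⟩ := mem_sheetDomain_iff.1 hp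
    refine mem_sheetDomain_iff.2 ⟨hp0, fun k hk => lt_of_le_of_lt ?_ (hpk k hk)⟩
    rw [norm_smul, Real.norm_of_nonneg hc0]
    exact mul_le_of_le_one_left (norm_nonneg _) hc1
  refine ⟨⟨_, haxis ⟨1, mem_Ioi.2 one_pos, rfl⟩⟩, isPreconnected_of_forall (0, 1) fun p hp => ?_⟩
  refine ⟨_ ∪ axis, union_subset (hslide p hp) haxis, Or.inr ⟨1, mem_Ioi.2 one_pos, rfl⟩,
    Or.inl ⟨1, ⟨zero_le_one, le_rfl⟩, by simp⟩, ?_⟩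
  exact (isPreconnected_Icc.image _ (by fun_prop)).union (0, p.2) ⟨0, by simp⟩
    ⟨p.2, (mem_sheetDomain_iff.1 hp).1, rfl⟩ (isPreconnected_Ioi.image _ (by fun_prop))

theorem hausdorffMeasure_sheets_inter_ball_eq_top (hn : 1 ≤ n)
    {p : EuclideanSpace ℝ (Fin n) × ℝ} (hp : p.2 = 0) {r : ℝ} (hr : 0 < r) :
    μH[(n : ℝ)] ((⋃ k : ℕ, sheet n (k + 1)) ∩ ball p r) = ⊤ := by
  have : Nonempty (Fin n) := ⟨⟨0, hn⟩⟩
  set A := ball p.1 r ∩ {x | r / 4 < ‖x‖}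
  have hA_open : IsOpen A := isOpen_ball.inter (isOpen_lt continuous_const continuous_norm)
  have hA : 0 < μH[(n : ℝ)] A := by
    obtain ⟨x, hx⟩ := exists_mem_ball_lt_norm p.1 hr
    simpa using hA_open.measure_pos μH[(Module.finrank ℝ (EuclideanSpace ℝ (Fin n)) : ℝ)] ⟨x, hx⟩
  obtain ⟨K, hK⟩ := eventually_atTop.1
    (tendsto_inv_two_pow_succ.eventually (gt_mem_nhds (by positivity : (0 : ℝ) < r / 4)))
  set height := fun k : ℕ => ((2 : ℝ) ^ (k + K + 1))⁻¹
  have height_inj : Injective height := fun i j hij => by simpa [height] using hij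
  refine measure_eq_top_of_disjoint_subsets _ (s := fun k => A ×ˢ {height k}) hA.ne'
    (fun k => ?_) (fun k => ?_) (fun i j hij => ?_) (fun k => ?_)
  · rw [prod_singleton,
      (isometry_prodMk_left (height k)).hausdorffMeasure_image (Or.inl n.cast_nonneg)]
  · exact hA_open.measurableSet.prod (measurableSet_singleton _)
  · exact disjoint_prod.2 (Or.inr (disjoint_singleton.2 (height_inj.ne hij)))
  · rintro q ⟨⟨hq_ball, hq_norm⟩, hq_height⟩
    rw [mem_singleton_iff] at hq_height
    have hk : height k < r / 4 := hK (k + K) (Nat.le_add_left K k)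
    refine ⟨mem_iUnion.2 ⟨k + K, hq_height, hk.le.trans hq_norm.le⟩, ?_⟩
    rw [mem_ball, Prod.dist_eq, max_lt_iff, Real.dist_eq, hp, hq_height, sub_zero,
      abs_of_pos (by positivity)]
    exact ⟨hq_ball, by linarith⟩

end

/-- Example 5.2: `Ω` is open and connected, its boundary is
`(ℝ^n × {0}) ∪ ⋃_{k ≥ 1} Σ_k`, and `H^n ⌞ ∂Ω` is not locally finite: every ball
centered at a point of `ℝ^n × {0}` has infinite `H^n` boundary measure. -/
theorem stmt13 {n : ℕ} (hn : 1 ≤ n) :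
    IsOpen (sheetDomain n) ∧ IsConnected (sheetDomain n) ∧
    frontier (sheetDomain n)
      = ({p : EuclideanSpace ℝ (Fin n) × ℝ | p.2 = 0} ∪ ⋃ k : ℕ, sheet n (k + 1)) ∧
    ∀ p : EuclideanSpace ℝ (Fin n) × ℝ, p.2 = 0 → ∀ r : ℝ, 0 < r →
      μH[(n : ℝ)] (frontier (sheetDomain n) ∩ ball p r) = ⊤ := by
  refine ⟨isOpen_sheetDomain n, isConnected_sheetDomain n, frontier_sheetDomain n,
    fun p hp r hr => ?_⟩
  rw [frontier_sheetDomain]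
  exact measure_mono_top (inter_subset_inter_left _ subset_union_right)
    (hausdorffMeasure_sheets_inter_ball_eq_top hn hp hr)
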